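/- For any fixed δ ∈ (0,1], there exists a constant C > 0 such that for all α ∈ (3/2, 2), |K_α δ^{2-α}/(2-α) − 2| + K_α δ^{1-α}/(α-1) ≤ C(2-α), where K_α = α(1-α)/(Γ(2-α)cos(πα/2)). Equivalently, |∫_{|z|≤δ}|z|² ν^{α,β}(dz) − 2| + ∫_{|z|>δ}|z| ν^{α,β}(dz) ≤ C(2-α). -/

import Mathlib

open MeasureTheory Real

/-- `K_α = α(1-α)/(Γ(2-α) cos(πα/2))`. -/
noncomputable def Kst (α : ℝ) : ℝ := α * (1 - α) / (Real.Gamma (2 - α) * Real.cos (π * α / 2))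

/-- Density of the non-symmetric α-stable Lévy measure `ν^{α,β}`. -/
noncomputable def nuDensity (α β z : ℝ) : ℝ :=
  if 0 < z then Kst α * (1 + β) / 2 / |z| ^ (1 + α)
  else Kst α * (1 - β) / 2 / |z| ^ (1 + α)

/-- Auxiliary function `h(α) = α(1-α)/(Γ(3-α) cos(πα/2))`, so `K_α = (2-α) h(α)`. -/
noncomputable def hfun (α : ℝ) : ℝ := α * (1 - α) / (Real.Gamma (3 - α) * Real.cos (π * α / 2))

lemma gamma_contDiffAt {x : ℝ} (hx : 0 < x) : ContDiffAt ℝ (⊤ : ℕ∞) Real.Gamma x := by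
  have hopen : IsOpen {s : ℂ | 0 < s.re} := isOpen_lt continuous_const Complex.continuous_re
  have hd : DifferentiableOn ℂ Complex.Gamma {s : ℂ | 0 < s.re} := by
    intro s hs
    refine (Complex.differentiableAt_Gamma s ?_).differentiableWithinAt
    intro m h
    rw [h] at hs
    simp only [Set.mem_setOf_eq, Complex.neg_re, Complex.natCast_re] at hs
    have : (0:ℝ) ≤ (m:ℝ) := Nat.cast_nonneg m
    linarith
  have hA : AnalyticAt ℂ Complex.Gamma (x : ℂ) :=
    hd.analyticAt (hopen.mem_nhds (by simpa using hx))
  have h1 : ContDiffAt ℝ (⊤ : ℕ∞) (fun y : ℝ => (Complex.Gamma (y : ℂ)).re) x := by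
    have hG : ContDiffAt ℝ (⊤ : ℕ∞) Complex.Gamma ((x : ℝ) : ℂ) :=
      (hA.contDiffAt).restrict_scalars ℝ
    exact Complex.reCLM.contDiff.contDiffAt.comp x
      (hG.comp x Complex.ofRealCLM.contDiff.contDiffAt)
  have : (fun y : ℝ => (Complex.Gamma (y : ℂ)).re) = Real.Gamma := by
    funext y
    rw [Complex.Gamma_ofReal, Complex.ofReal_re]
  rwa [this] at h1

lemma cos_neg_on {α : ℝ} (h1 : 1 < α) (h3 : α < 3) : Real.cos (π * α / 2) < 0 := by
  apply Real.cos_neg_of_pi_div_two_lt_of_lt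
  · nlinarith [Real.pi_pos]
  · nlinarith [Real.pi_pos]

lemma hfun_contDiffAt {α : ℝ} (h1 : 1 < α) (h3 : α < 3) : ContDiffAt ℝ (⊤ : ℕ∞) hfun α := by
  have hΓ : 0 < Real.Gamma (3 - α) := Real.Gamma_pos_of_pos (by linarith)
  have hc : Real.cos (π * α / 2) < 0 := cos_neg_on h1 h3
  have hnum : ContDiffAt ℝ (⊤ : ℕ∞) (fun α : ℝ => α * (1 - α)) α :=
    (contDiff_id.mul (contDiff_const.sub contDiff_id)).contDiffAt
  have hG : ContDiffAt ℝ (⊤ : ℕ∞) (fun α : ℝ => Real.Gamma (3 - α)) α := by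
    exact (gamma_contDiffAt (by linarith : (0:ℝ) < 3 - α)).comp α
      ((contDiff_const.sub contDiff_id).contDiffAt)
  have hcos : ContDiffAt ℝ (⊤ : ℕ∞) (fun α : ℝ => Real.cos (π * α / 2)) α := by
    exact Real.contDiff_cos.contDiffAt.comp α
      (((contDiff_const.mul contDiff_id).div_const 2).contDiffAt)
  exact hnum.div (hG.mul hcos) (mul_neg_of_pos_of_neg hΓ hc).ne

lemma hfun_two : hfun 2 = 2 := by
  have : (3:ℝ) - 2 = 1 := by norm_num
  simp only [hfun, this, Real.Gamma_one]
  have : π * 2 / 2 = π := by ring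
  rw [this, Real.cos_pi]
  norm_num

lemma Kst_eq {α : ℝ} (h2 : α ≠ 2) : Kst α = (2 - α) * hfun α := by
  have hne : (2:ℝ) - α ≠ 0 := sub_ne_zero.mpr (Ne.symm h2)
  have hΓ : Real.Gamma (3 - α) = (2 - α) * Real.Gamma (2 - α) := by
    have := Real.Gamma_add_one hne
    rw [show (2:ℝ) - α + 1 = 3 - α by ring] at this
    exact this
  rw [Kst, hfun, hΓ]
  by_cases hc : Real.cos (π * α / 2) = 0
  · simp [hc]
  by_cases hΓ2 : Real.Gamma (2 - α) = 0
  · simp [hΓ2]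
  field_simp

theorem stmt6 (δ : ℝ) (hδ : 0 < δ) (hδ1 : δ ≤ 1) :
    ∃ C > (0:ℝ), ∀ α ∈ Set.Ioo (3/2 : ℝ) 2,
      |Kst α * δ ^ (2 - α) / (2 - α) - 2| + Kst α * δ ^ (1 - α) / (α - 1)
        ≤ C * (2 - α) := by
  -- Lipschitz bound for hfun on [3/2, 2]
  have hIcc : Set.Icc (3/2 : ℝ) 2 ⊆ Set.Ioo (1:ℝ) 3 := by
    intro x hx; exact ⟨by linarith [hx.1], by linarith [hx.2]⟩
  have hcd : ContDiffOn ℝ 1 hfun (Set.Ioo (1:ℝ) 3) := by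
    intro x hx
    exact ((hfun_contDiffAt hx.1 hx.2).of_le (mod_cast le_top)).contDiffWithinAt
  have hderiv_cont : ContinuousOn (deriv hfun) (Set.Ioo (1:ℝ) 3) :=
    hcd.continuousOn_deriv_of_isOpen isOpen_Ioo le_rfl
  obtain ⟨L0, hL0⟩ := (isCompact_Icc (a := (3/2:ℝ)) (b := 2)).exists_bound_of_continuousOn
    (hderiv_cont.mono hIcc)
  set L : ℝ := max L0 0 with hLdef
  have hLnn : 0 ≤ L := le_max_right _ _
  have hdiff : ∀ x ∈ Set.Icc (3/2 : ℝ) 2, DifferentiableAt ℝ hfun x := by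
    intro x hx
    exact ((hfun_contDiffAt (hIcc hx).1 (hIcc hx).2).of_le (mod_cast le_top)).differentiableAt one_ne_zero
  have hLip : ∀ α ∈ Set.Icc (3/2 : ℝ) 2, |hfun α - 2| ≤ L * (2 - α) := by
    intro α hα
    have := Convex.norm_image_sub_le_of_norm_deriv_le (C := L) hdiff
      (fun x hx => le_trans (hL0 x hx) (le_max_left L0 0)) (convex_Icc _ _)
      (Set.right_mem_Icc.mpr (by norm_num)) hα
    rw [hfun_two] at this
    have habs : ‖α - 2‖ = 2 - α := by
      rw [Real.norm_eq_abs, abs_sub_comm, abs_of_nonneg (by linarith [hα.2])]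
    rwa [habs] at this
  set M : ℝ := 2 + L with hMdef
  have hM : ∀ α ∈ Set.Icc (3/2 : ℝ) 2, |hfun α| ≤ M := by
    intro α hα
    have h1 := hLip α hα
    have h2 : 2 - α ≤ 1 := by linarith [hα.1]
    calc |hfun α| ≤ |hfun α - 2| + |(2:ℝ)| := by
          have := abs_add_le (hfun α - 2) 2; simpa using this
      _ ≤ L * (2 - α) + 2 := by rw [abs_two]; linarith
      _ ≤ M := by nlinarith
  refine ⟨M * |Real.log δ| + L + 2 * M / δ + 1, by positivity, ?_⟩
  intro α hα
  obtain ⟨hα1, hα2⟩ := hα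
  have hαIcc : α ∈ Set.Icc (3/2 : ℝ) 2 := ⟨le_of_lt hα1, le_of_lt hα2⟩
  have hs : 0 < 2 - α := by linarith
  have hsne : (2:ℝ) - α ≠ 0 := ne_of_gt hs
  have hKst : Kst α = (2 - α) * hfun α := Kst_eq (ne_of_lt hα2)
  -- First term
  have hT1 : Kst α * δ ^ (2 - α) / (2 - α) = hfun α * δ ^ (2 - α) := by
    rw [hKst]; field_simp
  have hpow1 : |δ ^ (2 - α) - 1| ≤ (2 - α) * |Real.log δ| := by
    have hle1 : δ ^ (2 - α) ≤ 1 := Real.rpow_le_one hδ.le hδ1 hs.le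
    have hpos : 0 < δ ^ (2 - α) := Real.rpow_pos_of_pos hδ _
    have hexp : δ ^ (2 - α) = Real.exp ((2 - α) * Real.log δ) := by
      rw [Real.rpow_def_of_pos hδ, mul_comm]
    have hexp_ge : 1 + (2 - α) * Real.log δ ≤ δ ^ (2 - α) := by
      rw [hexp]; linarith [Real.add_one_le_exp ((2 - α) * Real.log δ)]
    have hlog : Real.log δ ≤ 0 := Real.log_nonpos hδ.le hδ1
    rw [abs_sub_comm, abs_of_nonneg (by linarith)]
    have : |Real.log δ| = -Real.log δ := abs_of_nonpos hlog
    rw [this]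
    nlinarith
  have hbM := hM α hαIcc
  have hbL := hLip α hαIcc
  have hT1bound : |Kst α * δ ^ (2 - α) / (2 - α) - 2| ≤ (M * |Real.log δ| + L) * (2 - α) := by
    rw [hT1]
    have : hfun α * δ ^ (2 - α) - 2 = hfun α * (δ ^ (2 - α) - 1) + (hfun α - 2) := by ring
    rw [this]
    calc |hfun α * (δ ^ (2 - α) - 1) + (hfun α - 2)|
        ≤ |hfun α * (δ ^ (2 - α) - 1)| + |hfun α - 2| := abs_add_le _ _
      _ = |hfun α| * |δ ^ (2 - α) - 1| + |hfun α - 2| := by rw [abs_mul]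
      _ ≤ M * ((2 - α) * |Real.log δ|) + L * (2 - α) := by
          have h0 : 0 ≤ |hfun α| := abs_nonneg _
          have h0' : 0 ≤ |δ ^ (2 - α) - 1| := abs_nonneg _
          gcongr
      _ = (M * |Real.log δ| + L) * (2 - α) := by ring
  -- Second term
  have hfpos : 0 < hfun α := by
    rw [hfun]
    apply div_pos_iff.mpr
    right
    constructor
    · nlinarith
    · exact mul_neg_of_pos_of_neg (Real.Gamma_pos_of_pos (by linarith)) (cos_neg_on (by linarith) (by linarith))
  have hT2bound : Kst α * δ ^ (1 - α) / (α - 1) ≤ (2 * M / δ) * (2 - α) := by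
    rw [hKst]
    have hpow : δ ^ (1 - α) ≤ δ⁻¹ := by
      have := Real.rpow_le_rpow_of_exponent_ge hδ hδ1 (by linarith : (-1:ℝ) ≤ 1 - α)
      rwa [Real.rpow_neg_one] at this
    have hpowpos : 0 < δ ^ (1 - α) := Real.rpow_pos_of_pos hδ _
    have hq : (1:ℝ)/2 < α - 1 := by linarith
    have hfle : hfun α ≤ M := le_trans (le_abs_self _) hbM
    have hMpos : 0 < M := lt_of_lt_of_le hfpos hfle
    have hinv : 0 < δ⁻¹ := inv_pos.mpr hδ
    have step1 : hfun α * δ ^ (1 - α) / (α - 1) ≤ 2 * (hfun α * δ ^ (1 - α)) := by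
      rw [div_le_iff₀ (by linarith : (0:ℝ) < α - 1)]
      nlinarith [mul_pos hfpos hpowpos]
    have step2 : hfun α * δ ^ (1 - α) ≤ M * δ⁻¹ := by
      have := mul_le_mul hfle hpow hpowpos.le hMpos.le
      exact this
    have : (2 - α) * hfun α * δ ^ (1 - α) / (α - 1)
        = (2 - α) * (hfun α * δ ^ (1 - α) / (α - 1)) := by ring
    rw [this]
    have : 2 * M / δ * (2 - α) = (2 - α) * (2 * (M * δ⁻¹)) := by
      field_simp
    rw [this]
    apply mul_le_mul_of_nonneg_left _ hs.le
    linarith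
  calc |Kst α * δ ^ (2 - α) / (2 - α) - 2| + Kst α * δ ^ (1 - α) / (α - 1)
      ≤ (M * |Real.log δ| + L) * (2 - α) + (2 * M / δ) * (2 - α) :=
        add_le_add hT1bound hT2bound
    _ ≤ (M * |Real.log δ| + L + 2 * M / δ + 1) * (2 - α) := by nlinarith
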